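/- arXiv:2304.00298 — 2 statements merged into one kernel-verified Lean document; each statement's English description precedes it below -/
import Mathlib

section
/- Specialization of Carlitz's identity: for every positive integer n, sum_{k=0}^{n-1} ((q; q^2)_k (-q^2; q^2)_k / (q^2; q^2)_k) * q^(n^2 - (k+1)^2) = sum_{k=0}^{n-1} (q; q^2)_n * q^(k^2 + k) / ((q^2; q^2)_k (q^2; q^2)_{n-k-1} (1 - q^(2n-2k-1))), as rational functions of q. -/
/-! Write `Q = q²`, `a = q`, `z = q²`. Both sides of the identity vanish at `n = 0` and satisfy
`T (n + 1) = q^(2n+1) T n + (q; q²)_n (-q²; q²)_n / (q²; q²)_n`; the left side is visibly the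
solution of this recurrence. The right side is `(a; Q)_n U (n - 1)` with
`U m = ∑_{k ≤ m} Q^(k choose 2) z^k / ((Q; Q)_k (Q; Q)_(m-k) (1 - a Q^(m-k)))`. Splitting
`1 - a Q^(m+1) = (1 - a Q^(m+1-k)) + a Q^(m+1-k) (1 - Q^k)` termwise gives
`(1 - a Q^(m+1)) U (m + 1) = a z Q^m U m + (-z; Q)_(m+1) / (Q; Q)_(m+1)`: the first parts sum,
by Cauchy's `q`-binomial theorem, to `(-z; Q)_(m+1) / (Q; Q)_(m+1)`, and the second parts are the
terms of `U m` shifted by one index. -/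

open Finset Polynomial

/-- The `q`-shifted factorial `(a; q)_m = (1-a)(1-aq)⋯(1-aq^(m-1))` in `ℚ(q)`. -/
noncomputable def qPoch (a q : RatFunc ℚ) (m : ℕ) : RatFunc ℚ :=
  ∏ i ∈ Finset.range m, (1 - a * q ^ i)

/-- Congruence `A ≡ B (mod Φ_n(q)^e)` in the localization of `ℚ[q]` at `(Φ_n(q))`:
the difference, cleared of a denominator coprime to `Φ_n(q)`, is divisible by `Φ_n(q)^e`. -/
def qCongruent (n e : ℕ) (A B : RatFunc ℚ) : Prop :=
  ∃ f g : Polynomial ℚ, ¬ Polynomial.cyclotomic n ℚ ∣ g ∧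
    (A - B) * algebraMap (Polynomial ℚ) (RatFunc ℚ) g =
      algebraMap (Polynomial ℚ) (RatFunc ℚ) (Polynomial.cyclotomic n ℚ ^ e * f)

lemma qPoch_zero (a Q : RatFunc ℚ) : qPoch a Q 0 = 1 := prod_range_zero _

lemma qPoch_succ (a Q : RatFunc ℚ) (m : ℕ) : qPoch a Q (m + 1) = qPoch a Q m * (1 - a * Q ^ m) :=
  prod_range_succ _ _

lemma qPoch_ne_zero {a Q : RatFunc ℚ} (ha : ∀ i, a * Q ^ i ≠ 1) (m : ℕ) : qPoch a Q m ≠ 0 :=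
  prod_ne_zero_iff.2 fun i _ => sub_ne_zero.2 (ha i).symm

lemma one_sub_mul_pow_eq {R : Type*} [CommRing R] (c Q : R) {k n : ℕ} (hk : k ≤ n) :
    1 - c * Q ^ n = (1 - c * Q ^ (n - k)) + c * Q ^ (n - k) * (1 - Q ^ k) := by
  rw [mul_assoc, mul_sub, mul_one, ← pow_add, Nat.sub_add_cancel hk]
  ring

/-- The term `[m, k]_Q Q^(k choose 2) z^k / (Q; Q)_m` of Cauchy's `q`-binomial theorem. -/
noncomputable def cauchyTerm (Q z : RatFunc ℚ) (m k : ℕ) : RatFunc ℚ :=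
  Q ^ k.choose 2 * z ^ k / (qPoch Q Q k * qPoch Q Q (m - k))

lemma one_sub_pow_mul_cauchyTerm_succ {Q : RatFunc ℚ} (hQ : ∀ i, Q * Q ^ i ≠ 1) (z : RatFunc ℚ)
    {m k : ℕ} (hk : k ≤ m) :
    (1 - Q ^ (m + 1 - k)) * cauchyTerm Q z (m + 1) k = cauchyTerm Q z m k := by
  have hne : 1 - Q * Q ^ (m - k) ≠ 0 := sub_ne_zero.2 (hQ _).symm
  rw [cauchyTerm, cauchyTerm, Nat.sub_add_comm hk, qPoch_succ, pow_succ']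
  field_simp [qPoch_ne_zero hQ]

lemma one_sub_pow_mul_cauchyTerm_succ_succ {Q : RatFunc ℚ} (hQ : ∀ i, Q * Q ^ i ≠ 1) (z : RatFunc ℚ)
    (m k : ℕ) :
    (1 - Q ^ (k + 1)) * cauchyTerm Q z (m + 1) (k + 1) = z * Q ^ k * cauchyTerm Q z m k := by
  have hne : 1 - Q * Q ^ k ≠ 0 := sub_ne_zero.2 (hQ _).symm
  rw [cauchyTerm, cauchyTerm, Nat.add_sub_add_right, qPoch_succ, Nat.choose_succ_succ',
    Nat.choose_one_right, pow_succ' Q k]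
  field_simp [qPoch_ne_zero hQ]
  ring

theorem sum_cauchyTerm {Q : RatFunc ℚ} (hQ : ∀ i, Q * Q ^ i ≠ 1) (z : RatFunc ℚ) (m : ℕ) :
    ∑ k ∈ range (m + 1), cauchyTerm Q z m k = qPoch (-z) Q m / qPoch Q Q m := by
  induction m with
  | zero => simp [cauchyTerm, qPoch_zero]
  | succ m ih =>
    have key :=
      calc (1 - Q ^ (m + 1)) * ∑ k ∈ range (m + 2), cauchyTerm Q z (m + 1) k
          = ∑ k ∈ range (m + 2), ((1 - Q ^ (m + 1 - k)) * cauchyTerm Q z (m + 1) k +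
              Q ^ (m + 1 - k) * ((1 - Q ^ k) * cauchyTerm Q z (m + 1) k)) := by
            rw [mul_sum]
            refine sum_congr rfl fun k hk => ?_
            rw [← one_mul (Q ^ (m + 1)), one_sub_mul_pow_eq 1 Q (mem_range_succ_iff.1 hk)]
            ring
        _ = ∑ k ∈ range (m + 1), cauchyTerm Q z m k +
              ∑ k ∈ range (m + 1), Q ^ (m - k) * (z * Q ^ k * cauchyTerm Q z m k) := by
            rw [sum_add_distrib, sum_range_succ, sum_range_succ' _ (m + 1)]
            simp only [Nat.sub_self, pow_zero, sub_self, zero_mul, mul_zero, add_zero,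
              Nat.add_sub_add_right, one_sub_pow_mul_cauchyTerm_succ_succ hQ]
            congr 1
            exact sum_congr rfl fun k hk =>
              one_sub_pow_mul_cauchyTerm_succ hQ z (mem_range_succ_iff.1 hk)
        _ = (1 + z * Q ^ m) * ∑ k ∈ range (m + 1), cauchyTerm Q z m k := by
            rw [add_mul, one_mul, mul_sum, add_right_inj]
            refine sum_congr rfl fun k hk => ?_
            rw [← pow_sub_mul_pow Q (mem_range_succ_iff.1 hk)]
            ring
    have hne : 1 - Q ^ (m + 1) ≠ 0 := sub_ne_zero.2 (pow_succ' Q m ▸ hQ m).symm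
    rw [ih] at key
    rw [qPoch_succ, qPoch_succ, ← pow_succ']
    field_simp [qPoch_ne_zero hQ] at key ⊢
    linear_combination key

noncomputable def carlitzSum (a Q z : RatFunc ℚ) (m : ℕ) : RatFunc ℚ :=
  ∑ k ∈ range (m + 1), cauchyTerm Q z m k / (1 - a * Q ^ (m - k))

theorem carlitzSum_succ {a Q : RatFunc ℚ} (hQ : ∀ i, Q * Q ^ i ≠ 1) (ha : ∀ i, a * Q ^ i ≠ 1)
    (z : RatFunc ℚ) (m : ℕ) :
    (1 - a * Q ^ (m + 1)) * carlitzSum a Q z (m + 1) =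
      a * z * Q ^ m * carlitzSum a Q z m + qPoch (-z) Q (m + 1) / qPoch Q Q (m + 1) := by
  have hne (j : ℕ) : 1 - a * Q ^ j ≠ 0 := sub_ne_zero.2 (ha j).symm
  calc (1 - a * Q ^ (m + 1)) * carlitzSum a Q z (m + 1)
      = ∑ k ∈ range (m + 2), (cauchyTerm Q z (m + 1) k + a * Q ^ (m + 1 - k) *
          ((1 - Q ^ k) * cauchyTerm Q z (m + 1) k) / (1 - a * Q ^ (m + 1 - k))) := by
        rw [carlitzSum, mul_sum]
        refine sum_congr rfl fun k hk => ?_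
        rw [one_sub_mul_pow_eq a Q (mem_range_succ_iff.1 hk)]
        field_simp [hne]
    _ = ∑ k ∈ range (m + 2), cauchyTerm Q z (m + 1) k +
          ∑ k ∈ range (m + 1), a * Q ^ (m - k) * (z * Q ^ k * cauchyTerm Q z m k) /
            (1 - a * Q ^ (m - k)) := by
        rw [sum_add_distrib]
        congr 1
        rw [sum_range_succ']
        simp only [pow_zero, sub_self, zero_mul, mul_zero, zero_div, add_zero,
          Nat.add_sub_add_right, one_sub_pow_mul_cauchyTerm_succ_succ hQ]
    _ = a * z * Q ^ m * carlitzSum a Q z m + qPoch (-z) Q (m + 1) / qPoch Q Q (m + 1) := by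
        rw [sum_cauchyTerm hQ, add_comm, carlitzSum, mul_sum]
        congr 1
        refine sum_congr rfl fun k hk => ?_
        rw [← pow_sub_mul_pow Q (mem_range_succ_iff.1 hk)]
        ring

theorem sum_mul_pow_sq_sub_sq_eq {R : Type*} [CommSemiring R] {x : R} {g T : ℕ → R}
    (h0 : T 0 = 0) (hT : ∀ n, T (n + 1) = x ^ (2 * n + 1) * T n + g n) (n : ℕ) :
    ∑ k ∈ range n, g k * x ^ (n ^ 2 - (k + 1) ^ 2) = T n := by
  induction n with
  | zero => rw [sum_range_zero, h0]
  | succ n ih =>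
    rw [sum_range_succ, Nat.sub_self, pow_zero, mul_one, hT, ← ih, mul_sum]
    congr 1
    refine sum_congr rfl fun k hk => ?_
    have hkn : (k + 1) ^ 2 ≤ n ^ 2 := Nat.pow_le_pow_left (mem_range.1 hk) 2
    rw [show (n + 1) ^ 2 - (k + 1) ^ 2 = 2 * n + 1 + (n ^ 2 - (k + 1) ^ 2) by
      rw [add_sq, ← Nat.add_sub_assoc hkn]; ring_nf, pow_add]
    ring

lemma RatFunc.X_pow_ne_one {K : Type*} [Field K] {m : ℕ} (hm : m ≠ 0) :
    (RatFunc.X : RatFunc K) ^ m ≠ 1 := by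
  rw [← RatFunc.algebraMap_X, ← map_pow, ← map_one (algebraMap K[X] (RatFunc K)), Ne,
    (RatFunc.algebraMap_injective K).eq_iff]
  intro h
  simpa [hm] using congrArg natDegree h

lemma X_sq_mul_X_sq_pow_ne_one (i : ℕ) :
    (RatFunc.X : RatFunc ℚ) ^ 2 * (RatFunc.X ^ 2) ^ i ≠ 1 := by
  rw [← pow_succ', ← pow_mul]
  exact RatFunc.X_pow_ne_one (by omega)

lemma X_mul_X_sq_pow_ne_one (i : ℕ) : (RatFunc.X : RatFunc ℚ) * (RatFunc.X ^ 2) ^ i ≠ 1 := by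
  rw [← pow_mul, ← pow_succ']
  exact RatFunc.X_pow_ne_one (by omega)

lemma two_mul_choose_two_add (k : ℕ) : 2 * (k.choose 2 + k) = k ^ 2 + k := by
  induction k with
  | zero => simp
  | succ k ih => rw [Nat.choose_succ_succ', Nat.choose_one_right]; nlinarith

noncomputable def carlitzRHS (n : ℕ) : RatFunc ℚ :=
  ∑ k ∈ range n,
    qPoch RatFunc.X (RatFunc.X ^ 2) n * RatFunc.X ^ (k ^ 2 + k) /
      (qPoch (RatFunc.X ^ 2) (RatFunc.X ^ 2) k *
        qPoch (RatFunc.X ^ 2) (RatFunc.X ^ 2) (n - k - 1) *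
        (1 - RatFunc.X ^ (2 * n - 2 * k - 1)))

lemma carlitzRHS_succ (n : ℕ) :
    carlitzRHS (n + 1) = qPoch RatFunc.X (RatFunc.X ^ 2) (n + 1) *
      carlitzSum RatFunc.X (RatFunc.X ^ 2) (RatFunc.X ^ 2) n := by
  rw [carlitzRHS, carlitzSum, mul_sum]
  refine sum_congr rfl fun k hk => ?_
  have hkn := mem_range_succ_iff.1 hk
  rw [cauchyTerm, ← pow_add, ← pow_mul, ← pow_mul, ← pow_succ',
    two_mul_choose_two_add, show n + 1 - k - 1 = n - k by omega,
    show 2 * (n + 1) - 2 * k - 1 = 2 * (n - k) + 1 by omega, mul_div_assoc, div_div]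

theorem carlitzRHS_succ_eq (n : ℕ) :
    carlitzRHS (n + 1) = RatFunc.X ^ (2 * n + 1) * carlitzRHS n +
      qPoch RatFunc.X (RatFunc.X ^ 2) n * qPoch (-(RatFunc.X ^ 2)) (RatFunc.X ^ 2) n /
        qPoch (RatFunc.X ^ 2) (RatFunc.X ^ 2) n := by
  cases n with
  | zero =>
    have hX : (RatFunc.X : RatFunc ℚ) ≠ 1 := by simpa using X_mul_X_sq_pow_ne_one 0
    simp [carlitzRHS, qPoch_succ, qPoch_zero, sub_ne_zero.2 hX.symm]
  | succ n =>
    rw [carlitzRHS_succ, carlitzRHS_succ, qPoch_succ RatFunc.X _ (n + 1)]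
    linear_combination qPoch RatFunc.X (RatFunc.X ^ 2) (n + 1) *
      carlitzSum_succ X_sq_mul_X_sq_pow_ne_one X_mul_X_sq_pow_ne_one (RatFunc.X ^ 2) n

theorem carlitz_specialization_two_general (n : ℕ) :
    ∑ k ∈ Finset.range n,
        qPoch RatFunc.X (RatFunc.X ^ 2) k * qPoch (-(RatFunc.X ^ 2)) (RatFunc.X ^ 2) k /
          qPoch (RatFunc.X ^ 2) (RatFunc.X ^ 2) k * RatFunc.X ^ (n ^ 2 - (k + 1) ^ 2) =
      ∑ k ∈ Finset.range n,
        qPoch RatFunc.X (RatFunc.X ^ 2) n * RatFunc.X ^ (k ^ 2 + k) /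
          (qPoch (RatFunc.X ^ 2) (RatFunc.X ^ 2) k *
            qPoch (RatFunc.X ^ 2) (RatFunc.X ^ 2) (n - k - 1) *
            (1 - RatFunc.X ^ (2 * n - 2 * k - 1))) :=
  sum_mul_pow_sq_sub_sq_eq (T := carlitzRHS) (sum_range_zero _) carlitzRHS_succ_eq n

/-- Specialization of Carlitz's identity (`q → q²`, `a = q`, `b = -q²`, `n → n-1`):
for every positive integer `n`, as rational functions of `q`. -/
theorem carlitz_specialization_two (n : ℕ) (hn : 0 < n) :
    ∑ k ∈ Finset.range n,
        qPoch RatFunc.X (RatFunc.X ^ 2) k * qPoch (-(RatFunc.X ^ 2)) (RatFunc.X ^ 2) k /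
          qPoch (RatFunc.X ^ 2) (RatFunc.X ^ 2) k * RatFunc.X ^ (n ^ 2 - (k + 1) ^ 2) =
      ∑ k ∈ Finset.range n,
        qPoch RatFunc.X (RatFunc.X ^ 2) n * RatFunc.X ^ (k ^ 2 + k) /
          (qPoch (RatFunc.X ^ 2) (RatFunc.X ^ 2) k *
            qPoch (RatFunc.X ^ 2) (RatFunc.X ^ 2) (n - k - 1) *
            (1 - RatFunc.X ^ (2 * n - 2 * k - 1))) :=
  carlitz_specialization_two_general n
end

section
/- Let n be a positive odd integer and d an integer with n > 2|d| - 1. Then sum_{k=0}^{n-1} ((q^(2d+1); q^2)_k / (q; q)_k) q^k ≡ (-1)^((n-1)/2 + d) q^((n^2 - (2d+1)^2)/4) (mod Φ_n(q)). -/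
open Finset Polynomial

/-!
Write `2d + 1 = n - 2m` with `0 ≤ m < n`. For elements of `ℚ(q)` whose denominators are prime to
`Φ_n(q)`, congruence modulo `Φ_n(q)` is equality of the values at a primitive `n`-th root of
unity `ζ`. At `ζ` the base `q^(2d+1)` becomes `ζ^(-2m)`, so `(ζ^(-2m); ζ²)_k` splits as
`(ζ^(-m); ζ)_k (-ζ^(-m); ζ)_k`, the sum terminates at `k = m`, and it is the terminating
`q`-Chu–Vandermonde sum `₂φ₁(q^(-m), b; 0; q, q) = b^m` at `b = -ζ^(-m)`. Its value
`(-1)^m ζ^(-m²)` is also the value of the right-hand side, since `ζ^n = 1`.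
-/

section QPochhammer

variable {R : Type*} [CommRing R]

def qPochhammer (a q : R) (m : ℕ) : R :=
  ∏ i ∈ range m, (1 - a * q ^ i)

theorem qPoch_eq_qPochhammer : qPoch = qPochhammer := rfl

@[simp]
theorem qPochhammer_zero (a q : R) : qPochhammer a q 0 = 1 := prod_range_zero _

theorem qPochhammer_succ (a q : R) (m : ℕ) :
    qPochhammer a q (m + 1) = qPochhammer a q m * (1 - a * q ^ m) :=
  prod_range_succ _ _

theorem qPochhammer_succ' (a q : R) (m : ℕ) :
    qPochhammer a q (m + 1) = (1 - a) * qPochhammer (a * q) q m := by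
  simp only [qPochhammer, prod_range_succ', pow_zero, mul_one]
  rw [mul_comm]
  exact congrArg _ (prod_congr rfl fun i _ => by ring)

theorem qPochhammer_mul_qPochhammer_neg (a q : R) (m : ℕ) :
    qPochhammer a q m * qPochhammer (-a) q m = qPochhammer (a ^ 2) (q ^ 2) m := by
  simp only [qPochhammer, ← prod_mul_distrib]
  exact prod_congr rfl fun _ _ => by ring

theorem qPochhammer_eq_zero {a q : R} {j m : ℕ} (h : a * q ^ j = 1) (hj : j < m) :
    qPochhammer a q m = 0 :=
  prod_eq_zero (mem_range.mpr hj) (by rw [h, sub_self])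

theorem qPochhammer_ne_zero_of_le [IsDomain R] {a q : R} {k m : ℕ}
    (h : qPochhammer a q m ≠ 0) (hkm : k ≤ m) : qPochhammer a q k ≠ 0 :=
  prod_ne_zero_iff.mpr fun i hi =>
    prod_ne_zero_iff.mp h i (mem_range.mpr ((mem_range.mp hi).trans_le hkm))

end QPochhammer

section QChuVandermonde

variable {K : Type*} [Field K] {q : K}

theorem qPochhammer_inv_pow_eq_zero (hq : q ≠ 0) {m k : ℕ} (hmk : m < k) :
    qPochhammer (q⁻¹ ^ m) q k = 0 :=
  qPochhammer_eq_zero (by rw [← mul_pow, inv_mul_cancel₀ hq, one_pow]) hmk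

theorem qPochhammer_inv_pow_pascal (hq : q ≠ 0) (m k : ℕ) (hk : qPochhammer q q (k + 1) ≠ 0) :
    qPochhammer (q⁻¹ ^ (m + 1)) q (k + 1) / qPochhammer q q (k + 1) * q ^ (k + 1) =
      qPochhammer (q⁻¹ ^ m) q (k + 1) / qPochhammer q q (k + 1) -
        qPochhammer (q⁻¹ ^ m) q k / qPochhammer q q k := by
  have hQ : qPochhammer q q k ≠ 0 := qPochhammer_ne_zero_of_le hk k.le_succ
  have hqk : 1 - q * q ^ k ≠ 0 := right_ne_zero_of_mul (qPochhammer_succ q q k ▸ hk)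
  have hshift : q⁻¹ ^ (m + 1) * q = q⁻¹ ^ m := by
    rw [pow_succ, mul_assoc, inv_mul_cancel₀ hq, mul_one]
  rw [qPochhammer_succ', hshift, qPochhammer_succ (q⁻¹ ^ m), qPochhammer_succ q, pow_succ q⁻¹]
  field_simp
  ring

theorem sum_qPochhammer_inv_pow_mul_qPochhammer (hq : q ≠ 0) (b : K) (m : ℕ)
    (hm : qPochhammer q q m ≠ 0) :
    ∑ k ∈ range (m + 1), qPochhammer (q⁻¹ ^ m) q k * qPochhammer b q k / qPochhammer q q k * q ^ k =
      b ^ m := by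
  set E : ℕ → ℕ → K := fun j k => qPochhammer (q⁻¹ ^ j) q k / qPochhammer q q k with hE
  set P : ℕ → K := qPochhammer b q
  have hterm : ∀ j k, qPochhammer (q⁻¹ ^ j) q k * P k / qPochhammer q q k * q ^ k =
      E j k * q ^ k * P k := fun j k => by rw [hE]; ring
  simp only [hterm]
  induction m with
  | zero => simp [E, P]
  | succ m ih =>
    have hm' : qPochhammer q q m ≠ 0 := qPochhammer_ne_zero_of_le hm m.le_succ
    have hvanish : E m (m + 1) = 0 := by
      simp only [hE, qPochhammer_inv_pow_eq_zero hq m.lt_succ_self, zero_div]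
    have hpascal : ∀ k ∈ range (m + 1), E (m + 1) (k + 1) * q ^ (k + 1) = E m (k + 1) - E m k :=
      fun k hk => qPochhammer_inv_pow_pascal hq m k
        (qPochhammer_ne_zero_of_le hm (Nat.succ_le_succ (mem_range_succ_iff.mp hk)))
    have hP : ∀ k, b * (q ^ k * P k) = P k - P (k + 1) := fun k => by
      simp only [P, qPochhammer_succ]; ring
    have hext : P 0 + ∑ k ∈ range (m + 1), E m (k + 1) * P (k + 1) =
        ∑ k ∈ range (m + 1), E m k * P k := by
      have h := (sum_range_succ' (fun k => E m k * P k) (m + 1)).symm.trans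
        (sum_range_succ (fun k => E m k * P k) (m + 1))
      have h0 : E m 0 * P 0 = 1 := by simp [E, P]
      rwa [h0, hvanish, zero_mul, add_zero, add_comm] at h
    calc ∑ k ∈ range (m + 1 + 1), E (m + 1) k * q ^ k * P k
        = P 0 + ∑ k ∈ range (m + 1), E (m + 1) (k + 1) * q ^ (k + 1) * P (k + 1) := by
          rw [sum_range_succ', add_comm]; simp [E]
      _ = P 0 + ∑ k ∈ range (m + 1), (E m (k + 1) - E m k) * P (k + 1) := by
          rw [sum_congr rfl fun k hk => by rw [hpascal k hk]]
      _ = ∑ k ∈ range (m + 1), E m k * (P k - P (k + 1)) := by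
          simp only [sub_mul, mul_sub, sum_sub_distrib]
          linear_combination hext
      _ = b * ∑ k ∈ range (m + 1), E m k * q ^ k * P k := by
          rw [mul_sum]; exact sum_congr rfl fun k _ => by rw [← hP]; ring
      _ = b ^ (m + 1) := by rw [ih hm', pow_succ, mul_comm]

theorem sum_range_qPochhammer_sq_inv_pow (hq : q ≠ 0) {m N : ℕ} (hm : qPochhammer q q m ≠ 0)
    (hN : m < N) :
    ∑ k ∈ range N, qPochhammer ((q⁻¹ ^ m) ^ 2) (q ^ 2) k / qPochhammer q q k * q ^ k =
      (-q⁻¹ ^ m) ^ m := by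
  simp only [← qPochhammer_mul_qPochhammer_neg]
  rw [← sum_subset (range_subset_range.mpr hN) fun k _ hk => ?_]
  · exact sum_qPochhammer_inv_pow_mul_qPochhammer hq _ m hm
  · rw [qPochhammer_inv_pow_eq_zero hq (by simpa using hk), zero_mul, zero_div, zero_mul]

end QChuVandermonde

theorem IsPrimitiveRoot.qPochhammer_self_ne_zero {L : Type*} [Field L] {ζ : L} {n k : ℕ}
    (hζ : IsPrimitiveRoot ζ n) (hk : k < n) : qPochhammer ζ ζ k ≠ 0 :=
  prod_ne_zero_iff.mpr fun i hi => by
    rw [← pow_succ', sub_ne_zero]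
    exact (hζ.pow_ne_one_of_pos_of_lt i.succ_ne_zero (by linarith [mem_range.mp hi])).symm

section Evaluation

variable {K L : Type*} [Field K] [Field L] [Algebra K L]

def HasValueAt (ζ : L) (x : RatFunc K) (z : L) : Prop :=
  ∃ f g : K[X], aeval ζ g ≠ 0 ∧
    x * algebraMap K[X] (RatFunc K) g = algebraMap K[X] (RatFunc K) f ∧ aeval ζ f = z * aeval ζ g

variable {ζ : L} {x y : RatFunc K} {z w : L}

theorem hasValueAt_algebraMap (ζ : L) (p : K[X]) :
    HasValueAt ζ (algebraMap K[X] (RatFunc K) p) (aeval ζ p) :=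
  ⟨p, 1, by simp, by simp, by simp⟩

theorem hasValueAt_one (ζ : L) : HasValueAt ζ (1 : RatFunc K) 1 := by
  simpa using hasValueAt_algebraMap (K := K) ζ 1

theorem hasValueAt_X (ζ : L) : HasValueAt ζ (RatFunc.X : RatFunc K) ζ := by
  simpa using hasValueAt_algebraMap (K := K) ζ X

namespace HasValueAt

theorem neg (hx : HasValueAt ζ x z) : HasValueAt ζ (-x) (-z) := by
  obtain ⟨f, g, hg, hx, hf⟩ := hx
  exact ⟨-f, g, hg, by rw [neg_mul, hx, map_neg], by rw [map_neg, hf, neg_mul]⟩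

theorem add (hx : HasValueAt ζ x z) (hy : HasValueAt ζ y w) : HasValueAt ζ (x + y) (z + w) := by
  obtain ⟨f, g, hg, hx, hf⟩ := hx
  obtain ⟨f', g', hg', hy, hf'⟩ := hy
  refine ⟨f * g' + f' * g, g * g', by simpa using mul_ne_zero hg hg', ?_, ?_⟩
  · simp only [map_add, map_mul, ← hx, ← hy]; ring
  · simp only [map_add, map_mul, hf, hf']; ring

theorem mul (hx : HasValueAt ζ x z) (hy : HasValueAt ζ y w) : HasValueAt ζ (x * y) (z * w) := by
  obtain ⟨f, g, hg, hx, hf⟩ := hx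
  obtain ⟨f', g', hg', hy, hf'⟩ := hy
  refine ⟨f * f', g * g', by simpa using mul_ne_zero hg hg', ?_, ?_⟩
  · simp only [map_mul, ← hx, ← hy]; ring
  · simp only [map_mul, hf, hf']; ring

theorem sub (hx : HasValueAt ζ x z) (hy : HasValueAt ζ y w) : HasValueAt ζ (x - y) (z - w) := by
  simpa only [sub_eq_add_neg] using hx.add hy.neg

theorem inv (hx : HasValueAt ζ x z) (hz : z ≠ 0) : HasValueAt ζ x⁻¹ z⁻¹ := by
  obtain ⟨f, g, hg, hx, hf⟩ := hx
  have hf0 : aeval ζ f ≠ 0 := by rw [hf]; exact mul_ne_zero hz hg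
  have hx0 : x ≠ 0 := by
    rintro rfl
    rw [zero_mul, eq_comm, map_eq_zero_iff _ (RatFunc.algebraMap_injective K)] at hx
    exact hf0 (by rw [hx, map_zero])
  refine ⟨g, f, hf0, ?_, ?_⟩
  · rw [← hx, inv_mul_cancel_left₀ hx0]
  · rw [hf, inv_mul_cancel_left₀ hz]

theorem div (hx : HasValueAt ζ x z) (hy : HasValueAt ζ y w) (hw : w ≠ 0) :
    HasValueAt ζ (x / y) (z / w) := by
  simpa only [div_eq_mul_inv] using hx.mul (hy.inv hw)

theorem pow (hx : HasValueAt ζ x z) (k : ℕ) : HasValueAt ζ (x ^ k) (z ^ k) := by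
  induction k with
  | zero => simpa using hasValueAt_one ζ
  | succ k ih => simpa only [pow_succ] using ih.mul hx

theorem zpow (hx : HasValueAt ζ x z) (hz : z ≠ 0) (k : ℤ) : HasValueAt ζ (x ^ k) (z ^ k) := by
  rcases k with k | k
  · simpa using hx.pow k
  · simpa using (hx.pow (k + 1)).inv (pow_ne_zero _ hz)

theorem sum {ι : Type*} {s : Finset ι} {x : ι → RatFunc K} {z : ι → L}
    (h : ∀ i ∈ s, HasValueAt ζ (x i) (z i)) : HasValueAt ζ (∑ i ∈ s, x i) (∑ i ∈ s, z i) := by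
  classical
  induction s using Finset.induction_on with
  | empty => simpa using hasValueAt_algebraMap (K := K) ζ 0
  | insert i s hi ih =>
    rw [sum_insert hi, sum_insert hi]
    exact (h i (mem_insert_self i s)).add (ih fun j hj => h j (mem_insert_of_mem hj))

theorem prod {ι : Type*} {s : Finset ι} {x : ι → RatFunc K} {z : ι → L}
    (h : ∀ i ∈ s, HasValueAt ζ (x i) (z i)) : HasValueAt ζ (∏ i ∈ s, x i) (∏ i ∈ s, z i) := by
  classical
  induction s using Finset.induction_on with
  | empty => simpa using hasValueAt_one (K := K) ζ
  | insert i s hi ih =>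
    rw [prod_insert hi, prod_insert hi]
    exact (h i (mem_insert_self i s)).mul (ih fun j hj => h j (mem_insert_of_mem hj))

theorem qPochhammer {a q : RatFunc K} {α β : L} (ha : HasValueAt ζ a α) (hq : HasValueAt ζ q β)
    (m : ℕ) : HasValueAt ζ (qPochhammer a q m) (qPochhammer α β m) :=
  prod fun i _ => (hasValueAt_one ζ).sub (ha.mul (hq.pow i))

end HasValueAt

end Evaluation

theorem qCongruent_of_hasValueAt {L : Type*} [Field L] [CharZero L] {n : ℕ} {ζ : L}
    (hζ : IsPrimitiveRoot ζ n) (hn : 0 < n) {A B : RatFunc ℚ} {z : L}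
    (hA : HasValueAt ζ A z) (hB : HasValueAt ζ B z) : qCongruent n 1 A B := by
  obtain ⟨f, g, hg, hfg, hf⟩ := hA.sub hB
  rw [sub_self, zero_mul] at hf
  have hΦ : cyclotomic n ℚ = minpoly ℚ ζ := cyclotomic_eq_minpoly_rat hζ hn
  obtain ⟨h, rfl⟩ : cyclotomic n ℚ ∣ f := hΦ ▸ minpoly.dvd ℚ ζ hf
  refine ⟨h, g, fun ⟨c, hc⟩ => hg ?_, by rw [hfg, pow_one]⟩
  rw [hc, map_mul, hΦ, minpoly.aeval, zero_mul]

theorem exists_nat_two_mul_add_one_eq_sub {n : ℕ} (ho : Odd n) {d : ℤ}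
    (hd : (n : ℤ) > 2 * |d| - 1) : ∃ m : ℕ, m < n ∧ 2 * d + 1 = n - 2 * m := by
  obtain ⟨w, rfl⟩ := ho
  refine ⟨(w - d).toNat, ?_, ?_⟩ <;> cases abs_cases d <;> omega

theorem wang_yu_congruence_general (n : ℕ) (ho : Odd n) (d : ℤ)
    (hd : (n : ℤ) > 2 * |d| - 1) :
    qCongruent n 1
      (∑ k ∈ Finset.range n,
        qPoch (RatFunc.X ^ (2 * d + 1)) (RatFunc.X ^ 2) k / qPoch RatFunc.X RatFunc.X k *
          RatFunc.X ^ k)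
      ((-1 : RatFunc ℚ) ^ (((n : ℤ) - 1) / 2 + d) *
        RatFunc.X ^ (((n : ℤ) ^ 2 - (2 * d + 1) ^ 2) / 4)) := by
  have hn : 0 < n := ho.pos
  obtain ⟨m, hmn, h2d⟩ := exists_nat_two_mul_add_one_eq_sub ho hd
  have hsign : ((n : ℤ) - 1) / 2 + d = m + 2 * d := by omega
  have hexp : ((n : ℤ) ^ 2 - (2 * d + 1) ^ 2) / 4 = ((m * n : ℕ) : ℤ) - ((m * m : ℕ) : ℤ) := by
    rw [h2d, show (n : ℤ) ^ 2 - (n - 2 * m) ^ 2 = 4 * (m * n - m * m) by ring,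
      Int.mul_ediv_cancel_left _ four_ne_zero]
    push_cast; ring
  set ζ : ℂ := Complex.exp (2 * Real.pi * Complex.I / n)
  have hζ : IsPrimitiveRoot ζ n := Complex.isPrimitiveRoot_exp n hn.ne'
  have hζ0 : ζ ≠ 0 := hζ.ne_zero hn.ne'
  have hX := hasValueAt_X (K := ℚ) ζ
  have hpow : ζ ^ (2 * d + 1) = (ζ⁻¹ ^ m) ^ 2 := by
    rw [h2d, zpow_sub₀ hζ0, zpow_natCast, hζ.pow_eq_one, one_div, zpow_mul, zpow_ofNat,
      zpow_natCast, ← pow_mul, ← pow_mul, inv_pow, mul_comm]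
  refine qCongruent_of_hasValueAt hζ hn (z := (-ζ⁻¹ ^ m) ^ m) ?_ ?_
  · rw [qPoch_eq_qPochhammer, ← sum_range_qPochhammer_sq_inv_pow hζ0
      (hζ.qPochhammer_self_ne_zero hmn) hmn, ← hpow]
    exact HasValueAt.sum fun k hk => (((hX.zpow hζ0 _).qPochhammer (hX.pow 2) k).div
      (hX.qPochhammer hX k) (hζ.qPochhammer_self_ne_zero (mem_range.mp hk))).mul (hX.pow k)
  · rw [hsign, hexp]
    convert ((hasValueAt_one ζ).neg.zpow (neg_ne_zero.mpr one_ne_zero) _).mul (hX.zpow hζ0 _)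
      using 1
    rw [zpow_add₀ (neg_ne_zero.mpr one_ne_zero), zpow_natCast, (even_two_mul d).neg_one_zpow,
      mul_one, zpow_sub₀ hζ0, zpow_natCast, zpow_natCast, pow_mul', hζ.pow_eq_one, one_pow,
      one_div, neg_pow, ← pow_mul, inv_pow]

/-- Wang–Yu: for odd `n > 2|d| - 1`,
`∑_{k=0}^{n-1} (q^(2d+1);q²)_k/(q;q)_k · q^k ≡ (-1)^((n-1)/2 + d) q^((n²-(2d+1)²)/4)
(mod Φ_n(q))`. -/
theorem wang_yu_congruence (n : ℕ) (hn : 0 < n) (ho : Odd n) (d : ℤ)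
    (hd : (n : ℤ) > 2 * |d| - 1) :
    qCongruent n 1
      (∑ k ∈ Finset.range n,
        qPoch (RatFunc.X ^ (2 * d + 1)) (RatFunc.X ^ 2) k / qPoch RatFunc.X RatFunc.X k *
          RatFunc.X ^ k)
      ((-1 : RatFunc ℚ) ^ (((n : ℤ) - 1) / 2 + d) *
        RatFunc.X ^ (((n : ℤ) ^ 2 - (2 * d + 1) ^ 2) / 4)) :=
  wang_yu_congruence_general n ho d hd
end
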